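/- Fix an integer N ≥ 1, a nonnegative continuous strictly increasing convex function ψ on [0,1], and a continuous odd function Φ on [−‖ψ‖_∞, ‖ψ‖_∞] whose restriction to [0, ‖ψ‖_∞] is convex. Let ψ̄ = (N+1)^{-1} ∑_{j=0}^N ψ(j/N). Then ∑_{j=0}^{N} Φ(ψ(j/N) − ψ̄) ≥ 0. -/

import Mathlib

/-!
Put `x j = ψ (j / N) - ψ̄`. Then `x` is increasing with zero sum, and by convexity of `ψ` the
symmetric sums `x j + x (N - j)` decrease towards the middle, which forces `x j ≤ 0` for
`2 j ≤ N`. As `Φ` is odd, `∑ Φ (x j) = ∑ Φ (u j) - ∑ Φ (v j)` with `u j = (x (N - j))⁺` and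
`v j = (x j)⁻`, two families in `[0, M]` with equal sums. If `v j < u j` and `u k < v k` then
`j ≤ k`, so `v k ≤ v j`: every interval `[u k, v k]` lies to the left of every interval
`[v j, u j]`. By convexity the secant slopes of `Φ` over the former are at most those over the
latter, and any slope `γ` in between gives `∑ (Φ (u i) - Φ (v i)) ≥ γ ∑ (u i - v i) = 0`.
-/

open Finset

section Convex

variable {𝕜 : Type*} [Field 𝕜] [LinearOrder 𝕜] [IsStrictOrderedRing 𝕜] {s : Set 𝕜} {f : 𝕜 → 𝕜}

theorem ConvexOn.slope_le_slope (hf : ConvexOn 𝕜 s f) {a b c d : 𝕜} (ha : a ∈ s) (hb : b ∈ s)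
    (hc : c ∈ s) (hd : d ∈ s) (hab : a < b) (hcd : c < d) (hac : a ≤ c) (hbd : b ≤ d) :
    slope f a b ≤ slope f c d :=
  calc slope f a b ≤ slope f a d :=
        hf.slope_mono ha ⟨hb, hab.ne'⟩ ⟨hd, (hab.trans_le hbd).ne'⟩ hbd
    _ = slope f d a := slope_comm f a d
    _ ≤ slope f d c := hf.slope_mono hd ⟨ha, (hab.trans_le hbd).ne⟩ ⟨hc, hcd.ne⟩ hac
    _ = slope f c d := slope_comm f d c

theorem ConvexOn.add_le_add_of_add_eq (hf : ConvexOn 𝕜 s f) {a b c d : 𝕜} (ha : a ∈ s)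
    (hb : b ∈ s) (hc : c ∈ s) (hd : d ∈ s) (hab : a ≤ b) (hac : a ≤ c) (hbd : b ≤ d)
    (hadd : b + c = a + d) : f b + f c ≤ f a + f d := by
  rcases hab.eq_or_lt with rfl | hab
  · obtain rfl : c = d := by linear_combination hadd
    exact le_rfl
  have hslope := hf.slope_le_slope ha hb hc hd hab (by linear_combination hab + hadd) hac hbd
  rw [slope_def_field, slope_def_field, show d - c = b - a by linear_combination -hadd,
    div_le_div_iff_of_pos_right (sub_pos.2 hab)] at hslope
  linarith

theorem ConvexOn.sum_map_le_sum_map_of_sum_eq {ι : Type*} (hf : ConvexOn 𝕜 s f) {t : Finset ι}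
    {u v : ι → 𝕜} (hu : ∀ i ∈ t, u i ∈ s) (hv : ∀ i ∈ t, v i ∈ s) (hsum : ∑ i ∈ t, u i = ∑ i ∈ t, v i)
    (hcross : ∀ i ∈ t, ∀ k ∈ t, v i < u i → u k < v k → v k ≤ v i) :
    ∑ i ∈ t, f (v i) ≤ ∑ i ∈ t, f (u i) := by
  suffices ∃ γ, ∀ i ∈ t, γ * (u i - v i) ≤ slope f (v i) (u i) * (u i - v i) by
    obtain ⟨γ, hγ⟩ := this
    have hincr : ∀ i, slope f (v i) (u i) * (u i - v i) = f (u i) - f (v i) := fun i => by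
      rw [mul_comm, ← smul_eq_mul, sub_smul_slope, vsub_eq_sub]
    have := sum_le_sum hγ
    simp only [hincr, ← mul_sum, sum_sub_distrib, hsum, sub_self, mul_zero] at this
    linarith
  rcases (t.filter fun k => u k < v k).eq_empty_or_nonempty with hdec | hdec
  · have hle : ∀ i ∈ t, v i ≤ u i := fun i hi => not_lt.1 fun h =>
      (filter_eq_empty_iff.1 hdec) hi h
    have heq := (sum_eq_sum_iff_of_le hle).1 hsum.symm
    exact ⟨0, fun i hi => by simp [heq i hi]⟩
  obtain ⟨k, hkQ, hkmax⟩ := exists_max_image _ (fun k => slope f (u k) (v k)) hdec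
  obtain ⟨hk, hkuv⟩ := mem_filter.1 hkQ
  refine ⟨slope f (u k) (v k), fun i hi => ?_⟩
  rcases lt_trichotomy (u i) (v i) with h | h | h
  · rw [slope_comm f (v i)]
    exact mul_le_mul_of_nonpos_right (hkmax i (mem_filter.2 ⟨hi, h⟩)) (sub_nonpos.2 h.le)
  · simp [h]
  · have hvk := hcross i hi k hk h hkuv
    refine mul_le_mul_of_nonneg_right ?_ (sub_nonneg.2 h.le)
    exact hf.slope_le_slope (hu k hk) (hv k hk) (hv i hi) (hu i hi) hkuv h
      (hkuv.le.trans hvk) (hvk.trans h.le)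

end Convex

theorem Finset.sum_range_succ_reflect {M : Type*} [AddCommMonoid M] (f : ℕ → M) (n : ℕ) :
    ∑ j ∈ range (n + 1), f (n - j) = ∑ j ∈ range (n + 1), f j := by
  simpa using sum_range_reflect f (n + 1)

theorem map_eq_map_posPart_sub_map_negPart {Φ : ℝ → ℝ} {M t : ℝ}
    (hodd : ∀ t ∈ Set.Icc 0 M, Φ (-t) = -Φ t) (ht : |t| ≤ M) : Φ t = Φ t⁺ - Φ t⁻ := by
  have hΦ0 : Φ 0 = 0 := by
    have := hodd 0 ⟨le_rfl, (abs_nonneg t).trans ht⟩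
    rw [neg_zero] at this
    linarith
  rcases le_total 0 t with h | h
  · rw [posPart_eq_self.2 h, negPart_eq_zero.2 h, hΦ0, sub_zero]
  · rw [posPart_eq_zero.2 h, negPart_eq_neg.2 h, hΦ0, zero_sub,
      ← hodd (-t) ⟨neg_nonneg.2 h, (neg_le_abs t).trans ht⟩, neg_neg]

section SymmetricSums

variable {x : ℕ → ℝ} {n : ℕ} (hmono : MonotoneOn x (Set.Iic n))
  (hsym : AntitoneOn (fun j => x j + x (n - j)) {j | 2 * j ≤ n})
  (hsum : ∑ j ∈ range (n + 1), x j = 0)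
include hmono hsym hsum

theorem nonpos_of_two_mul_le {j : ℕ} (hj : 2 * j ≤ n) : x j ≤ 0 := by
  have hmid : 2 * (n / 2) ≤ n := Nat.mul_div_le n 2
  have hmin : ∀ k ∈ range (n + 1), x (n / 2) + x (n - n / 2) ≤ x k + x (n - k) := by
    intro k hk
    have hkn : k ≤ n := Nat.lt_succ_iff.1 (mem_range.1 hk)
    rcases le_total (2 * k) n with h | h
    · exact hsym h hmid (by omega)
    · have := hsym (show 2 * (n - k) ≤ n by omega) hmid (by omega)
      simp only [Nat.sub_sub_self hkn] at this
      linarith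
  have hzero : ∑ k ∈ range (n + 1), (x k + x (n - k)) ≤ ∑ k ∈ range (n + 1), 0 := by
    rw [sum_add_distrib, sum_range_succ_reflect x, hsum, sum_const_zero, add_zero]
  obtain ⟨k, hk, hk0⟩ := exists_le_of_sum_le nonempty_range_add_one hzero
  have hjm : x j ≤ x (n / 2) := hmono (by simp; omega) (by simp; omega) (by omega)
  have hm : x (n / 2) ≤ x (n - n / 2) := hmono (by simp; omega) (by simp) (by omega)
  linarith [hmin k hk]

theorem le_of_negPart_lt_posPart_reflect {j k : ℕ} (hj : (x j)⁻ < (x (n - j))⁺)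
    (hk : (x (n - k))⁺ < (x k)⁻) : j ≤ k := by
  by_contra! hkj
  have hxnj : 0 < x (n - j) := posPart_pos_iff.1 ((negPart_nonneg _).trans_lt hj)
  have h2j : 2 * j ≤ n := by
    by_contra h
    exact not_lt.2 (nonpos_of_two_mul_le hmono hsym hsum (by omega : 2 * (n - j) ≤ n)) hxnj
  rw [negPart_eq_neg.2 (nonpos_of_two_mul_le hmono hsym hsum h2j),
    posPart_eq_self.2 hxnj.le] at hj
  have hxk : x k < 0 := negPart_pos_iff.1 ((posPart_nonneg _).trans_lt hk)
  rw [negPart_eq_neg.2 hxk.le] at hk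
  have := hsym (show 2 * k ≤ n by omega) h2j hkj.le
  linarith [le_posPart (x (n - k))]

theorem sum_range_map_nonneg_of_antitoneOn_add_reflect {Φ : ℝ → ℝ} {M : ℝ}
    (hbd : ∀ j ≤ n, |x j| ≤ M) (hodd : ∀ t ∈ Set.Icc 0 M, Φ (-t) = -Φ t)
    (hconv : ConvexOn ℝ (Set.Icc 0 M) Φ) : 0 ≤ ∑ j ∈ range (n + 1), Φ (x j) := by
  have hu : ∀ j ∈ range (n + 1), (x (n - j))⁺ ∈ Set.Icc 0 M := fun j _ =>
    ⟨posPart_nonneg _, max_le ((le_abs_self _).trans (hbd _ (Nat.sub_le n j)))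
      ((abs_nonneg _).trans (hbd _ (Nat.sub_le n j)))⟩
  have hv : ∀ j ∈ range (n + 1), (x j)⁻ ∈ Set.Icc 0 M := fun j hj =>
    have hxj := hbd j (Nat.lt_succ_iff.1 (mem_range.1 hj))
    ⟨negPart_nonneg _, max_le ((neg_le_abs _).trans hxj) ((abs_nonneg _).trans hxj)⟩
  have hsplit : ∑ j ∈ range (n + 1), Φ (x j)
      = ∑ j ∈ range (n + 1), Φ (x (n - j))⁺ - ∑ j ∈ range (n + 1), Φ (x j)⁻ := by
    rw [sum_range_succ_reflect (fun j => Φ (x j)⁺), ← sum_sub_distrib]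
    exact sum_congr rfl fun j hj =>
      map_eq_map_posPart_sub_map_negPart hodd (hbd j (Nat.lt_succ_iff.1 (mem_range.1 hj)))
  have hbalance : ∑ j ∈ range (n + 1), (x (n - j))⁺ = ∑ j ∈ range (n + 1), (x j)⁻ := by
    rw [sum_range_succ_reflect (fun j => (x j)⁺), ← sub_eq_zero, ← sum_sub_distrib]
    simpa only [posPart_sub_negPart] using hsum
  rw [hsplit, sub_nonneg]
  refine hconv.sum_map_le_sum_map_of_sum_eq hu hv hbalance fun j hj k hk hjuv hkuv => ?_
  have hjk := le_of_negPart_lt_posPart_reflect hmono hsym hsum hjuv hkuv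
  exact negPart_anti (hmono (by simpa [Nat.lt_succ_iff] using hj)
    (by simpa [Nat.lt_succ_iff] using hk) hjk)

end SymmetricSums

theorem Finset.sum_div_card_mem_Icc {ι : Type*} {t : Finset ι} (ht : t.Nonempty) {f : ι → ℝ}
    {a b : ℝ} (hf : ∀ i ∈ t, f i ∈ Set.Icc a b) : (∑ i ∈ t, f i) / #t ∈ Set.Icc a b := by
  have hcard : (0 : ℝ) < #t := by exact_mod_cast ht.card_pos
  have hlo := card_nsmul_le_sum t f a fun i hi => (hf i hi).1
  have hhi := sum_le_card_nsmul t f b fun i hi => (hf i hi).2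
  rw [nsmul_eq_mul] at hlo hhi
  exact ⟨(le_div_iff₀ hcard).2 (by linarith), (div_le_iff₀ hcard).2 (by linarith)⟩

theorem MonotoneOn.csSup_abs_image_Icc {ψ : ℝ → ℝ} {a b : ℝ} (hab : a ≤ b)
    (hψ : MonotoneOn ψ (Set.Icc a b)) (hψ0 : ∀ x ∈ Set.Icc a b, 0 ≤ ψ x) :
    sSup ((fun x => |ψ x|) '' Set.Icc a b) = ψ b := by
  have hb := Set.right_mem_Icc.2 hab
  refine IsGreatest.csSup_eq ⟨⟨b, hb, abs_of_nonneg (hψ0 b hb)⟩, ?_⟩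
  rintro _ ⟨y, hy, rfl⟩
  exact (abs_of_nonneg (hψ0 y hy)).trans_le (hψ hy hb hy.2)

theorem natCast_div_mem_Icc {j N : ℕ} (hj : j ≤ N) : (j / N : ℝ) ∈ Set.Icc 0 1 :=
  ⟨by positivity, div_le_one_of_le₀ (Nat.cast_le.2 hj) N.cast_nonneg⟩

theorem MonotoneOn.comp_natCast_div {ψ : ℝ → ℝ} (hψ : MonotoneOn ψ (Set.Icc 0 1)) (N : ℕ) :
    MonotoneOn (fun j : ℕ => ψ (j / N)) (Set.Iic N) := fun _ hi _ hj hij =>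
  hψ (natCast_div_mem_Icc hi) (natCast_div_mem_Icc hj) (by gcongr)

theorem ConvexOn.antitoneOn_add_reflect {ψ : ℝ → ℝ} (hψ : ConvexOn ℝ (Set.Icc 0 1) ψ) (N : ℕ) :
    AntitoneOn (fun j : ℕ => ψ (j / N) + ψ ((N - j : ℕ) / N)) {j | 2 * j ≤ N} := by
  intro k (hk : 2 * k ≤ N) j (hj : 2 * j ≤ N) hkj
  have hdiv {a b : ℕ} (h : a ≤ b) : (a / N : ℝ) ≤ b / N := by gcongr
  refine hψ.add_le_add_of_add_eq (natCast_div_mem_Icc (by omega)) (natCast_div_mem_Icc (by omega))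
    (natCast_div_mem_Icc (Nat.sub_le N j)) (natCast_div_mem_Icc (Nat.sub_le N k)) (hdiv hkj)
    (hdiv (by omega)) (hdiv (by omega)) ?_
  rw [← add_div, ← add_div]
  norm_cast
  rw [Nat.add_sub_of_le (by omega), Nat.add_sub_of_le (by omega)]

theorem MSW_half_odd_integer_general (N : ℕ) (ψ Φ : ℝ → ℝ)
    (hψ0 : ∀ x ∈ Set.Icc (0:ℝ) 1, 0 ≤ ψ x)
    (hψmono : StrictMonoOn ψ (Set.Icc (0:ℝ) 1))
    (hψconv : ConvexOn ℝ (Set.Icc (0:ℝ) 1) ψ)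
    (M : ℝ) (hM : M = sSup ((fun x => |ψ x|) '' Set.Icc (0:ℝ) 1))
    (hΦodd : ∀ t ∈ Set.Icc (-M) M, Φ (-t) = -Φ t)
    (hΦconv : ConvexOn ℝ (Set.Icc (0:ℝ) M) Φ) :
    0 ≤ ∑ j ∈ Finset.range (N+1),
        Φ (ψ (j / N) - (∑ k ∈ Finset.range (N+1), ψ (k / N)) / (N+1)) := by
  set ψbar := (∑ k ∈ range (N + 1), ψ (k / N)) / (N + 1 : ℝ)
  have hone := Set.right_mem_Icc.2 (zero_le_one' ℝ)
  have hM1 : M = ψ 1 := hM.trans (hψmono.monotoneOn.csSup_abs_image_Icc zero_le_one hψ0)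
  have hψM : ∀ j ∈ range (N + 1), ψ (j / N) ∈ Set.Icc 0 M := fun j hj =>
    have hjN := natCast_div_mem_Icc (Nat.lt_succ_iff.1 (mem_range.1 hj))
    ⟨hψ0 _ hjN, hM1 ▸ hψmono.monotoneOn hjN hone hjN.2⟩
  have hψbar : ψbar ∈ Set.Icc 0 M := by
    simpa using sum_div_card_mem_Icc nonempty_range_add_one hψM
  refine sum_range_map_nonneg_of_antitoneOn_add_reflect (x := fun j => ψ (j / N) - ψbar)
    (fun i hi j hj hij => sub_le_sub_right (hψmono.monotoneOn.comp_natCast_div N hi hj hij) _)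
    (fun k hk j hj hkj => ?_) ?_ (fun j hj => ?_)
    (fun t ht => hΦodd t ⟨by linarith [ht.1, ht.2], ht.2⟩) hΦconv
  · have := hψconv.antitoneOn_add_reflect N hk hj hkj
    dsimp only at this ⊢
    linarith
  · rw [sum_sub_distrib, sum_const, card_range, nsmul_eq_mul, Nat.cast_succ,
      mul_div_cancel₀ _ (by positivity), sub_self]
  · have hψj := hψM j (mem_range.2 (Nat.lt_succ_iff.2 hj))
    exact abs_sub_le_of_nonneg_of_le hψj.1 hψj.2 hψbar.1 hψbar.2

/-- Theorem 4.4 (Madrid–Simon–Wells). -/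
theorem MSW_half_odd_integer (N : ℕ) (hN : 1 ≤ N) (ψ Φ : ℝ → ℝ)
    (hψ0 : ∀ x ∈ Set.Icc (0:ℝ) 1, 0 ≤ ψ x)
    (hψcont : ContinuousOn ψ (Set.Icc (0:ℝ) 1))
    (hψmono : StrictMonoOn ψ (Set.Icc (0:ℝ) 1))
    (hψconv : ConvexOn ℝ (Set.Icc (0:ℝ) 1) ψ)
    (M : ℝ) (hM : M = sSup ((fun x => |ψ x|) '' Set.Icc (0:ℝ) 1))
    (hΦcont : ContinuousOn Φ (Set.Icc (-M) M))
    (hΦodd : ∀ t ∈ Set.Icc (-M) M, Φ (-t) = -Φ t)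
    (hΦconv : ConvexOn ℝ (Set.Icc (0:ℝ) M) Φ) :
    0 ≤ ∑ j ∈ Finset.range (N+1),
        Φ (ψ (j / N) - (∑ k ∈ Finset.range (N+1), ψ (k / N)) / (N+1)) :=
  MSW_half_odd_integer_general N ψ Φ hψ0 hψmono hψconv M hM hΦodd hΦconv
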